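/- Fix λ > 1. Let a < b be positive integers and 1 ≤ k ≤ a. Let ℛ_{a,b}^k be the a×b rectangle with a k-protuberance attached along the (shorter) side of length a, and let R̄_{a,b}^k be the same rectangle with the k-protuberance attached along the longer side of length b. Then Per_λ(R̄_{a,b}^k) − Per_λ(ℛ_{a,b}^k) = 2k Σ_{r=a+1}^{b} 1/r^λ > 0. -/

import Mathlib

/-!
With `K d = |d|^(-λ)` and `Z = ∑_{d ∈ ℤ} K d`, every site interacts with the whole lattice with
total weight `2Z`, so `Per_λ P = 2Z·|P| − ∑_{x,y ∈ P} w(x,y)`. Swapping the coordinates preserves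
`w` and carries `ℛ^k_{b,a}` onto `R̄^k_{a,b}`, so only `Per_λ(ℛ^k_{a,b})` (for `k ≤ a`) has to be
computed. In it the self-interaction of the rectangle is symmetric in `a` and `b`, that of the
protuberance does not see the rectangle, and each protuberance site interacts only with the row it
continues, with weight `∑_{j=1}^{b} j^(-λ)`; this last term is all that changes between the two
polyominoes.
-/

/-- The bi-axial fractional interaction between two lattice sites. -/
noncomputable def biAxialWeight (lam : ℝ) (x y : ℤ × ℤ) : ℝ :=
  if x.1 = y.1 ∧ x.2 ≠ y.2 then 1 / ((|x.2 - y.2| : ℤ) : ℝ) ^ lam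
  else if x.2 = y.2 ∧ x.1 ≠ y.1 then 1 / ((|x.1 - y.1| : ℤ) : ℝ) ^ lam
  else 0

/-- The nonlocal bi-axial perimeter of a polyomino, identified with the finite
set of centers of its unit squares. -/
noncomputable def nonlocalPer (lam : ℝ) (P : Finset (ℤ × ℤ)) : ℝ :=
  ∑ x ∈ P, ∑' y : {y : ℤ × ℤ // y ∉ P}, biAxialWeight lam x (y : ℤ × ℤ)

/-- The a×b rectangle polyomino: b columns (horizontal side b) and a rows
(vertical side a). -/
noncomputable def rectP (a b : ℕ) : Finset (ℤ × ℤ) := Finset.Ico (0 : ℤ) b ×ˢ Finset.Ico (0 : ℤ) a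

/-- The a×b rectangle with a k-protuberance attached along the (shorter)
vertical side of length a. -/
noncomputable def rectProtShort (a b k : ℕ) : Finset (ℤ × ℤ) :=
  rectP a b ∪ ({(b : ℤ)} : Finset ℤ) ×ˢ Finset.Ico (0 : ℤ) k

/-- The a×b rectangle with a k-protuberance attached along the (longer)
horizontal side of length b. -/
noncomputable def rectProtLong (a b k : ℕ) : Finset (ℤ × ℤ) :=
  rectP a b ∪ Finset.Ico (0 : ℤ) k ×ˢ ({(a : ℤ)} : Finset ℤ)

open Finset

noncomputable def axialKernel (lam : ℝ) (d : ℤ) : ℝ := 1 / ((|d| : ℤ) : ℝ) ^ lam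

noncomputable def genHarmonic (lam : ℝ) (n : ℕ) : ℝ := ∑ j ∈ Icc 1 n, 1 / (j : ℝ) ^ lam

noncomputable def interaction (lam : ℝ) (P Q : Finset (ℤ × ℤ)) : ℝ :=
  ∑ x ∈ P, ∑ y ∈ Q, biAxialWeight lam x y

section Kernel

variable {lam : ℝ}

lemma axialKernel_zero (h : lam ≠ 0) : axialKernel lam 0 = 0 := by
  simp [axialKernel, Real.zero_rpow h]

lemma axialKernel_neg (d : ℤ) : axialKernel lam (-d) = axialKernel lam d := by
  simp [axialKernel]

lemma summable_axialKernel (h : 1 < lam) : Summable (axialKernel lam) :=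
  (Real.summable_abs_int_rpow h).congr fun n => by
    rw [Real.rpow_neg (abs_nonneg _)]
    simp [axialKernel, one_div]

lemma sum_axialKernel_sub_self (n : ℕ) :
    ∑ c ∈ Ico (0 : ℤ) n, axialKernel lam (c - n) = genHarmonic lam n := by
  refine sum_nbij' (fun c => ((n : ℤ) - c).toNat) (fun j => (n : ℤ) - j) ?_ ?_ ?_ ?_ ?_
  · intro c hc; simp only [mem_Ico, mem_Icc] at hc ⊢; omega
  · intro j hj; simp only [mem_Ico, mem_Icc] at hj ⊢; omega
  · intro c hc; simp only [mem_Ico] at hc; omega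
  · intro j hj; simp only [mem_Icc] at hj; omega
  · intro c hc
    simp only [mem_Ico] at hc
    have habs : |c - (n : ℤ)| = (((n : ℤ) - c).toNat : ℤ) := by
      rw [abs_sub_comm, abs_of_nonneg (by omega), Int.toNat_of_nonneg (by omega)]
    simp only [axialKernel, habs, Int.cast_natCast]

lemma genHarmonic_sub_genHarmonic {a b : ℕ} (hab : a ≤ b) :
    genHarmonic lam b - genHarmonic lam a = ∑ r ∈ Icc (a + 1) b, 1 / (r : ℝ) ^ lam := by
  have hIcc (n : ℕ) : Icc 1 n = Ioc 0 n := Icc_add_one_left_eq_Ioc 0 n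
  rw [genHarmonic, genHarmonic, hIcc, hIcc, Icc_add_one_left_eq_Ioc,
    ← sum_Ioc_consecutive _ (Nat.zero_le a) hab]
  ring

end Kernel

section Weight

variable {lam : ℝ}

lemma biAxialWeight_eq (h : lam ≠ 0) (x y : ℤ × ℤ) :
    biAxialWeight lam x y =
      (if x.1 = y.1 then axialKernel lam (x.2 - y.2) else 0) +
      (if x.2 = y.2 then axialKernel lam (x.1 - y.1) else 0) := by
  unfold biAxialWeight axialKernel
  by_cases h1 : x.1 = y.1 <;> by_cases h2 : x.2 = y.2 <;>
    simp [h1, h2, Real.zero_rpow h]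

lemma biAxialWeight_comm (lam : ℝ) (x y : ℤ × ℤ) :
    biAxialWeight lam x y = biAxialWeight lam y x := by
  unfold biAxialWeight
  rw [abs_sub_comm x.2, abs_sub_comm x.1]
  simp only [eq_comm, ne_comm]

lemma biAxialWeight_swap (lam : ℝ) (x y : ℤ × ℤ) :
    biAxialWeight lam x.swap y.swap = biAxialWeight lam x y := by
  unfold biAxialWeight
  simp only [Prod.fst_swap, Prod.snd_swap]
  split_ifs <;> first | rfl | tauto

lemma hasSum_ite_fst_eq {f : ℤ → ℝ} {s : ℝ} (hf : HasSum f s) (x : ℤ × ℤ) :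
    HasSum (fun y : ℤ × ℤ => if x.1 = y.1 then f (x.2 - y.2) else 0) s := by
  have hinj : Function.Injective fun t : ℤ => (x.1, x.2 - t) := fun t t' htt' => by
    simpa using htt'
  refine (hinj.hasSum_iff fun y hy => ?_).1 ?_
  · refine if_neg fun hxy => hy ⟨x.2 - y.2, ?_⟩
    ext <;> simp [hxy]
  · simpa [Function.comp_def] using hf

lemma hasSum_biAxialWeight (h : 1 < lam) (x : ℤ × ℤ) :
    HasSum (biAxialWeight lam x) (2 * ∑' d, axialKernel lam d) := by
  have hK := (summable_axialKernel h).hasSum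
  have hrow := hasSum_ite_fst_eq hK x
  have hcol := (Equiv.prodComm ℤ ℤ).hasSum_iff.2 (hasSum_ite_fst_eq hK x.swap)
  rw [two_mul]
  convert hrow.add hcol using 1
  funext y
  exact biAxialWeight_eq (by linarith) x y

end Weight

section Interaction

variable {lam : ℝ}

lemma nonlocalPer_eq (h : 1 < lam) (P : Finset (ℤ × ℤ)) :
    nonlocalPer lam P = 2 * P.card * ∑' d, axialKernel lam d - interaction lam P P := by
  have hsite (x : ℤ × ℤ) : ∑' y : {y : ℤ × ℤ // y ∉ P}, biAxialWeight lam x y =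
      2 * ∑' d, axialKernel lam d - ∑ y ∈ P, biAxialWeight lam x y := by
    refine (P.hasSum_compl_iff.2 ?_).tsum_eq
    simpa only [sub_add_cancel] using hasSum_biAxialWeight h x
  simp only [nonlocalPer, interaction, hsite, sum_sub_distrib, sum_const, nsmul_eq_mul]
  ring

lemma interaction_union_left {P Q : Finset (ℤ × ℤ)} (hPQ : Disjoint P Q) (R : Finset (ℤ × ℤ)) :
    interaction lam (P ∪ Q) R = interaction lam P R + interaction lam Q R :=
  sum_union hPQ

lemma interaction_union_right {P Q : Finset (ℤ × ℤ)} (hPQ : Disjoint P Q) (R : Finset (ℤ × ℤ)) :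
    interaction lam R (P ∪ Q) = interaction lam R P + interaction lam R Q := by
  simp only [interaction, sum_union hPQ, sum_add_distrib]

lemma interaction_comm (lam : ℝ) (P Q : Finset (ℤ × ℤ)) :
    interaction lam P Q = interaction lam Q P := by
  rw [interaction, sum_comm]
  exact sum_congr rfl fun y _ => sum_congr rfl fun x _ => biAxialWeight_comm lam x y

lemma interaction_union_self {P Q : Finset (ℤ × ℤ)} (hPQ : Disjoint P Q) :
    interaction lam (P ∪ Q) (P ∪ Q) =
      interaction lam P P + 2 * interaction lam P Q + interaction lam Q Q := by
  rw [interaction_union_left hPQ, interaction_union_right hPQ, interaction_union_right hPQ,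
    interaction_comm lam Q P]
  ring

lemma interaction_map_swap (lam : ℝ) (P Q : Finset (ℤ × ℤ)) :
    interaction lam (P.map (Equiv.prodComm ℤ ℤ).toEmbedding)
      (Q.map (Equiv.prodComm ℤ ℤ).toEmbedding) = interaction lam P Q := by
  simp only [interaction, sum_map]
  exact sum_congr rfl fun x _ => sum_congr rfl fun y _ => biAxialWeight_swap lam x y

lemma nonlocalPer_map_swap (h : 1 < lam) (P : Finset (ℤ × ℤ)) :
    nonlocalPer lam (P.map (Equiv.prodComm ℤ ℤ).toEmbedding) = nonlocalPer lam P := by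
  rw [nonlocalPer_eq h, nonlocalPer_eq h, card_map, interaction_map_swap]

lemma interaction_column_self (h : lam ≠ 0) (c : ℤ) (T : Finset ℤ) :
    interaction lam ({c} ×ˢ T) ({c} ×ˢ T) = ∑ r ∈ T, ∑ r' ∈ T, axialKernel lam (r - r') := by
  simp only [interaction, sum_product, sum_singleton, biAxialWeight_eq h]
  refine sum_congr rfl fun r _ => sum_congr rfl fun r' _ => ?_
  by_cases hr : r = r' <;> simp [hr, axialKernel_zero h]

end Interaction

section Rectangles

variable {lam : ℝ}

lemma rectP_swap (a b : ℕ) : (rectP a b).map (Equiv.prodComm ℤ ℤ).toEmbedding = rectP b a :=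
  map_swap_product _ _

lemma rectProtShort_swap (a b k : ℕ) :
    (rectProtShort b a k).map (Equiv.prodComm ℤ ℤ).toEmbedding = rectProtLong a b k := by
  rw [rectProtShort, rectProtLong, map_union, rectP_swap]
  exact congrArg _ (map_swap_product _ _)

lemma disjoint_rectP_column (a b k : ℕ) : Disjoint (rectP a b) ({(b : ℤ)} ×ˢ Ico (0 : ℤ) k) := by
  rw [disjoint_left]
  rintro ⟨c, r⟩ hR hQ
  simp only [rectP, mem_product, mem_Ico, mem_singleton] at hR hQ
  omega

lemma interaction_rectP_column (h : lam ≠ 0) {a k : ℕ} (hk : k ≤ a) (b : ℕ) :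
    interaction lam (rectP a b) ({(b : ℤ)} ×ˢ Ico (0 : ℤ) k) = k * genHarmonic lam b := by
  have hsite : ∀ c ∈ Ico (0 : ℤ) b, ∀ r : ℤ,
      ∑ y ∈ {(b : ℤ)} ×ˢ Ico (0 : ℤ) k, biAxialWeight lam (c, r) y =
        if r ∈ Ico (0 : ℤ) k then axialKernel lam (c - b) else 0 := by
    intro c hc r
    have hcb : c ≠ b := by simp only [mem_Ico] at hc; omega
    simp [biAxialWeight_eq h, hcb]
  have hrows : (Ico (0 : ℤ) a).filter (· ∈ Ico (0 : ℤ) k) = Ico (0 : ℤ) k := by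
    ext r; simp only [mem_filter, mem_Ico]; omega
  rw [interaction, rectP, sum_product, ← sum_axialKernel_sub_self, mul_sum]
  refine sum_congr rfl fun c hc => ?_
  rw [sum_congr rfl fun r _ => hsite c hc r, ← sum_filter, hrows, sum_const, Int.card_Ico]
  simp

lemma nonlocalPer_rectProtShort (h : 1 < lam) {a k : ℕ} (hk : k ≤ a) (b : ℕ) :
    nonlocalPer lam (rectProtShort a b k) =
      2 * (a * b + k) * ∑' d, axialKernel lam d - interaction lam (rectP a b) (rectP a b)
        - 2 * k * genHarmonic lam b - ∑ r ∈ Ico (0 : ℤ) k, ∑ r' ∈ Ico (0 : ℤ) k,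
          axialKernel lam (r - r') := by
  have h0 : lam ≠ 0 := by linarith
  have hcard : (rectProtShort a b k).card = a * b + k := by
    rw [rectProtShort, card_union_of_disjoint (disjoint_rectP_column a b k)]
    simp [rectP, Nat.mul_comm]
  rw [nonlocalPer_eq h, hcard, rectProtShort,
    interaction_union_self (disjoint_rectP_column a b k), interaction_rectP_column h0 hk,
    interaction_column_self h0]
  push_cast
  ring

end Rectangles

theorem stmt_15_general (lam : ℝ) (hlam : 1 < lam) (a b k : ℕ)
    (hab : a < b) (hk1 : 1 ≤ k) (hk : k ≤ a) :
    nonlocalPer lam (rectProtLong a b k) - nonlocalPer lam (rectProtShort a b k) =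
        2 * k * ∑ r ∈ Finset.Icc (a + 1) b, 1 / (r : ℝ) ^ lam ∧
      2 * k * ∑ r ∈ Finset.Icc (a + 1) b, 1 / (r : ℝ) ^ lam > 0 := by
  have hsymm :
      interaction lam (rectP b a) (rectP b a) = interaction lam (rectP a b) (rectP a b) := by
    rw [← rectP_swap, interaction_map_swap]
  refine ⟨?_, ?_⟩
  · rw [← rectProtShort_swap, nonlocalPer_map_swap hlam, nonlocalPer_rectProtShort hlam hk,
      nonlocalPer_rectProtShort hlam (hk.trans hab.le), hsymm,
      ← genHarmonic_sub_genHarmonic hab.le]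
    ring
  · have hterm : ∀ r ∈ Icc (a + 1) b, 0 < 1 / (r : ℝ) ^ lam := fun r hr => by
      have : 0 < r := by simp only [mem_Icc] at hr; omega
      positivity
    have hk0 : (0 : ℝ) < k := by exact_mod_cast hk1
    have := sum_pos hterm ⟨b, by simp only [mem_Icc]; omega⟩
    positivity

theorem stmt_15 (lam : ℝ) (hlam : 1 < lam) (a b k : ℕ)
    (hab : a < b) (ha : 1 ≤ a) (hk1 : 1 ≤ k) (hk : k ≤ a) :
    nonlocalPer lam (rectProtLong a b k) - nonlocalPer lam (rectProtShort a b k) =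
        2 * k * ∑ r ∈ Finset.Icc (a + 1) b, 1 / (r : ℝ) ^ lam ∧
      2 * k * ∑ r ∈ Finset.Icc (a + 1) b, 1 / (r : ℝ) ^ lam > 0 :=
  stmt_15_general lam hlam a b k hab hk1 hk
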